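/- Let {V_{ε^k} : 0 ≤ k ≤ m-1} be a partition of U_m^n, let H_{ε^k} be the induced subgraph of the Hamming graph H(n,m) on V_{ε^k}, and let H'_{ε^k} be the induced subgraph of H(n,m) on ρ(V_{ε^k}). Then (m-1)·n − min{δ(H_{ε^k}) : 0 ≤ k ≤ m-1} ≥ max{Δ(H'_{ε^k}) : 0 ≤ k ≤ m-1}. -/

import Mathlib

open scoped Classical

noncomputable section

/-- The primitive `m`-th root of unity `ε = e^{2πi/m}`. -/
def primRoot (m : ℕ) : ℂ := Complex.exp (2 * Real.pi * Complex.I / m)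

/-- The bijection `k ↦ ε^k` from `ZMod m` onto the set `U_m` of `m`-th roots of unity;
vectors of `U_m^n` are modelled by their exponent vectors in `(ZMod m)^n`. -/
def uRoot (m : ℕ) (k : ZMod m) : ℂ := primRoot m ^ k.val

/-- `F` represents the `m`-ary function `U_m^n → U_m` given in exponents by `g`,
i.e. the function `(ε^{x 1}, …, ε^{x n}) ↦ ε^{g x}`. -/
def RepresentsU (m n : ℕ) (F : MvPolynomial (Fin n) ℂ)
    (g : (Fin n → ZMod m) → ZMod m) : Prop :=
  ∀ x : Fin n → ZMod m, MvPolynomial.eval (fun i => uRoot m (x i)) F = uRoot m (g x)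

/-- Degree of the `m`-ary function `U_m^n → U_m` given in exponents by `g`. -/
def degU (m n : ℕ) (g : (Fin n → ZMod m) → ZMod m) : ℕ :=
  sInf {d | ∃ F : MvPolynomial (Fin n) ℂ, RepresentsU m n F g ∧ F.totalDegree = d}

/-- Local sensitivity of the `m`-ary function `U_m^n → U_m` given in exponents by `g`. -/
def localSensU (m n : ℕ) [NeZero m] (g : (Fin n → ZMod m) → ZMod m)
    (x : Fin n → ZMod m) : ℕ :=
  (Finset.univ.filter fun y : Fin n → ZMod m => hammingDist x y = 1 ∧ g y ≠ g x).card

/-- Sensitivity of the `m`-ary function `U_m^n → U_m` given in exponents by `g`. -/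
def sensU (m n : ℕ) [NeZero m] (g : (Fin n → ZMod m) → ZMod m) : ℕ :=
  Finset.univ.sup (localSensU m n g)

/-- Degree of the vertex `v` in the subgraph of the Hamming graph induced on `V`:
the number of vertices of `V` at Hamming distance exactly `1` from `v`. -/
def indDeg {ι α : Type*} [Fintype ι] (V : Finset (ι → α)) (v : ι → α) : ℕ :=
  (V.filter fun w => hammingDist v w = 1).card

/-- Minimum degree `δ` of the subgraph of the Hamming graph induced on `V`
(it is `⊤ = +∞` for the empty graph). -/
def minDeg {ι α : Type*} [Fintype ι] (V : Finset (ι → α)) : ℕ∞ :=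
  V.inf fun v => (indDeg V v : ℕ∞)

/-- Maximum degree `Δ` of the subgraph of the Hamming graph induced on `V`. -/
def maxDeg {ι α : Type*} [Fintype ι] (V : Finset (ι → α)) : ℕ :=
  V.sup fun v => indDeg V v

/-- The rotation `ρ` applied to the part `V k` of a partition of `U_m^n` (in exponent
coordinates): `x ∈ ρ(V)_k` iff `x ∈ C_{ε^j} ∩ V_{ε^{k-j}}` for some `j`, where
`C_{ε^j}` consists of the vertices whose entries multiply to `ε^j`, i.e. whose exponents
sum to `j`. -/
def rho (m n : ℕ) [NeZero m] (V : ZMod m → Finset (Fin n → ZMod m)) (k : ZMod m) :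
    Finset (Fin n → ZMod m) :=
  Finset.univ.filter fun x => x ∈ V (k - ∑ i, x i)

/-! Fix `k` and a vertex `x`, and put `j = k - Σ xᵢ`. A vertex `w` in both `ρ(V_k)` and `V_j`
also lies in `V_{k - Σ wᵢ}`, so `Σ wᵢ = Σ xᵢ` because the `V`'s partition the cube; but a Hamming
neighbour of `x` has a different coordinate sum. So the neighbours of `x` in `ρ(V_k)` and in `V_j`
are disjoint among its `(m-1)n` neighbours, and when `x ∈ ρ(V_k)`, i.e. `x ∈ V_j`,
`deg_{ρ(V_k)} x + δ ≤ deg_{ρ(V_k)} x + deg_{V_j} x ≤ (m-1)n`. -/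

open Finset

section HammingNeighbours

variable {ι β : Type*} [Fintype ι]

lemma exists_eq_update_of_hammingDist_eq_one {x y : ι → β} (h : hammingDist x y = 1) :
    ∃ i b, b ≠ x i ∧ y = Function.update x i b := by
  obtain ⟨i, hi⟩ := card_eq_one.mp h
  have hdiff : ∀ j, x j ≠ y j ↔ j = i := fun j => by
    simpa using congrArg (j ∈ ·) hi
  refine ⟨i, y i, fun h => (hdiff i).mpr rfl h.symm, funext fun j => ?_⟩
  by_cases hj : j = i
  · subst hj; simp
  · rw [Function.update_of_ne hj]
    exact (not_not.mp (mt (hdiff j).mp hj)).symm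

lemma sum_ne_sum_of_hammingDist_eq_one [AddCancelCommMonoid β] {x y : ι → β}
    (h : hammingDist x y = 1) : ∑ i, x i ≠ ∑ i, y i := by
  obtain ⟨i, b, hne, rfl⟩ := exists_eq_update_of_hammingDist_eq_one h
  rw [Fintype.sum_eq_add_sum_compl i, Fintype.sum_eq_add_sum_compl i (Function.update x i _)]
  simp only [Function.update_self]
  rw [sum_congr rfl fun j hj => Function.update_of_ne (by simpa using hj) _ x]
  exact fun h => hne (add_right_cancel h).symm

lemma card_filter_hammingDist_eq_one_le [Fintype β] (x : ι → β) :
    #{y | hammingDist x y = 1} ≤ (Fintype.card β - 1) * Fintype.card ι := by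
  have hsub : ({y | hammingDist x y = 1} : Finset (ι → β)) ⊆
      univ.biUnion fun i => (univ.erase (x i)).image (Function.update x i) := by
    intro y hy
    obtain ⟨i, b, hne, rfl⟩ := exists_eq_update_of_hammingDist_eq_one (mem_filter.mp hy).2
    exact mem_biUnion.mpr ⟨i, mem_univ i, mem_image.mpr ⟨b, by simpa using hne, rfl⟩⟩
  calc #{y | hammingDist x y = 1}
      ≤ ∑ i : ι, #((univ.erase (x i)).image (Function.update x i)) :=
        (card_le_card hsub).trans card_biUnion_le
    _ ≤ ∑ _i : ι, (Fintype.card β - 1) :=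
        sum_le_sum fun i _ => card_image_le.trans (card_erase_of_mem (mem_univ _)).le
    _ = _ := by simp [mul_comm]

end HammingNeighbours

section InducedDegree

variable {ι β : Type*} [Fintype ι]

lemma indDeg_le_card_mul [Fintype β] (A : Finset (ι → β)) (x : ι → β) :
    indDeg A x ≤ (Fintype.card β - 1) * Fintype.card ι :=
  (card_le_card (filter_subset_filter _ (subset_univ A))).trans
    (card_filter_hammingDist_eq_one_le x)

lemma indDeg_add_indDeg [DecidableEq (ι → β)] (A B : Finset (ι → β)) (x : ι → β) :
    indDeg A x + indDeg B x = indDeg (A ∪ B) x + indDeg (A ∩ B) x := by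
  simp only [indDeg, filter_union, filter_inter_distrib, card_union_add_card_inter]

lemma indDeg_eq_zero_of_sum_eq [AddCancelCommMonoid β] {A : Finset (ι → β)} {x : ι → β}
    (h : ∀ w ∈ A, ∑ i, w i = ∑ i, x i) : indDeg A x = 0 :=
  card_eq_zero.mpr <| filter_false_of_mem fun w hw hd =>
    sum_ne_sum_of_hammingDist_eq_one hd (h w hw).symm

lemma minDeg_le_indDeg {A : Finset (ι → β)} {x : ι → β} (hx : x ∈ A) :
    minDeg A ≤ indDeg A x :=
  inf_le hx

end InducedDegree

section Rotation

variable {m n : ℕ} [NeZero m] {V : ZMod m → Finset (Fin n → ZMod m)}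

lemma mem_rho {k : ZMod m} {x : Fin n → ZMod m} : x ∈ rho m n V k ↔ x ∈ V (k - ∑ i, x i) := by
  simp [rho]

lemma sum_eq_of_mem_rho_inter (hpart : ∀ x : Fin n → ZMod m, ∃! k : ZMod m, x ∈ V k)
    {k : ZMod m} {x w : Fin n → ZMod m} (hw : w ∈ rho m n V k ∩ V (k - ∑ i, x i)) :
    ∑ i, w i = ∑ i, x i := by
  obtain ⟨hwρ, hwV⟩ := mem_inter.mp hw
  exact sub_right_injective ((hpart w).unique (mem_rho.mp hwρ) hwV)

lemma indDeg_rho_add_indDeg_le (hpart : ∀ x : Fin n → ZMod m, ∃! k : ZMod m, x ∈ V k)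
    (k : ZMod m) (x : Fin n → ZMod m) :
    indDeg (rho m n V k) x + indDeg (V (k - ∑ i, x i)) x ≤ (m - 1) * n := by
  have hinter : indDeg (rho m n V k ∩ V (k - ∑ i, x i)) x = 0 :=
    indDeg_eq_zero_of_sum_eq fun w hw => sum_eq_of_mem_rho_inter hpart hw
  rw [indDeg_add_indDeg, hinter, add_zero]
  simpa using indDeg_le_card_mul (rho m n V k ∪ V (k - ∑ i, x i)) x

end Rotation

theorem stmt19_general (m n : ℕ) [NeZero m]
    (V : ZMod m → Finset (Fin n → ZMod m))
    (hpart : ∀ x : Fin n → ZMod m, ∃! k : ZMod m, x ∈ V k) :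
    ((Finset.univ.sup fun k : ZMod m => maxDeg (rho m n V k) : ℕ) : ℕ∞) ≤
      (((m - 1) * n : ℕ) : ℕ∞) -
        Finset.univ.inf (fun k : ZMod m => minDeg (V k)) := by
  have hδ : ∀ k x, x ∈ V k → univ.inf (fun k => minDeg (V k)) ≤ indDeg (V k) x :=
    fun k x hx => (inf_le (mem_univ k)).trans (minDeg_le_indDeg hx)
  obtain ⟨d, hd⟩ : ∃ d : ℕ, (d : ℕ∞) = univ.inf (fun k => minDeg (V k)) := by
    obtain ⟨k, hk, -⟩ := hpart 0
    exact ENat.ne_top_iff_exists.mp (ne_top_of_le_ne_top (ENat.natCast_ne_top _) (hδ k 0 hk))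
  rw [← hd, ← ENat.natCast_sub, Nat.cast_le]
  refine Finset.sup_le fun k _ => Finset.sup_le fun x hx => ?_
  have hdx : d ≤ indDeg (V (k - ∑ i, x i)) x := by exact_mod_cast hd ▸ hδ _ x (mem_rho.mp hx)
  have hdeg := indDeg_rho_add_indDeg_le hpart k x
  omega

theorem stmt19 (m n : ℕ) [NeZero m] (hm : 2 ≤ m) (hn : 1 ≤ n)
    (V : ZMod m → Finset (Fin n → ZMod m))
    (hpart : ∀ x : Fin n → ZMod m, ∃! k : ZMod m, x ∈ V k) :
    ((Finset.univ.sup fun k : ZMod m => maxDeg (rho m n V k) : ℕ) : ℕ∞) ≤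
      (((m - 1) * n : ℕ) : ℕ∞) -
        Finset.univ.inf (fun k : ZMod m => minDeg (V k)) :=
  stmt19_general m n V hpart
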